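/- Let (p,q) ∈ ℕ×ℤ with p ≥ 1, let (k,l) ∈ ℤ×ℤ and let x ∈ X_{p,q}. Then Σ_{i=1}^{p} |(τ_{k,l}x − x)_i| ≥ |pl − qk|, with equality when x is moreover a Birkhoff sequence. Consequently, the induced action of (ℤ×ℤ)/J_{p,q} on X_{p,q}, where J_{p,q} = {(np,nq) : n ∈ ℤ}, is free if and only if p and q are relatively prime. -/

import Mathlib

open Filter Topology

/-- The shift map `τ_{k,l}`: `(τ_{k,l} x) i = x (i - k) + l`. -/
def tau (k l : ℤ) (x : ℤ → ℝ) : ℤ → ℝ := fun i => x (i - k) + (l : ℝ)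

/-- A sequence is Birkhoff (well-ordered) if its integer translates are totally ordered
in the pointwise partial order. -/
def Birkhoff (x : ℤ → ℝ) : Prop :=
  ∀ k l k' l' : ℤ, tau k l x ≤ tau k' l' x ∨ tau k' l' x ≤ tau k l x

/-- `x` has rotation number `ω` if `x n / n → ω` as `n → ±∞`. -/
def HasRotNum (x : ℤ → ℝ) (ω : ℝ) : Prop :=
  Tendsto (fun n : ℤ => x n / (n : ℝ)) atTop (𝓝 ω) ∧
  Tendsto (fun n : ℤ => x n / (n : ℝ)) atBot (𝓝 ω)

/-- A Birkhoff sequence of rotation number `ω` is maximally periodic if `τ_{k,l} x = x`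
whenever `-ω k + l = 0`. -/
def MaxPeriodic (ω : ℝ) (x : ℤ → ℝ) : Prop :=
  ∀ k l : ℤ, -ω * (k : ℝ) + (l : ℝ) = 0 → tau k l x = x

/-- Partial derivative of a function on sequence space with respect to coordinate `i`. -/
noncomputable def pd (F : (ℤ → ℝ) → ℝ) (i : ℤ) : (ℤ → ℝ) → ℝ :=
  fun x => deriv (fun t => F (Function.update x i t)) (x i)

/-- Iterated partial derivatives along a list of coordinates. -/
noncomputable def pdList (F : (ℤ → ℝ) → ℝ) : List ℤ → (ℤ → ℝ) → ℝ
  | [] => F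
  | i :: L => pd (pdList F L) i

/-- `F` and `G` are `ε`-close in the `C^k` norm: all iterated partial derivatives of order
`≤ k` of the difference are bounded by `ε`. -/
def CkClose (k : ℕ) (ε : ℝ) (F G : (ℤ → ℝ) → ℝ) : Prop :=
  ∀ L : List ℤ, L.length ≤ k → ∀ x : ℤ → ℝ, |pdList (fun y => F y - G y) L x| ≤ ε

/-- Conditions A-E on a family of local potentials `S j : ℝ^ℤ → ℝ`, with range `r` and
uniform derivative bound `C`. -/
structure SatisfiesAE (r : ℕ) (C : ℝ) (S : ℤ → (ℤ → ℝ) → ℝ) : Prop where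
  r_pos : 1 ≤ r
  C_pos : 0 < C
  /- A: finite range -/
  finRange : ∀ j : ℤ, ∀ x y : ℤ → ℝ, (∀ i : ℤ, |i - j| ≤ (r : ℤ) → x i = y i) → S j x = S j y
  /- A: C² smoothness -/
  contS : ∀ j : ℤ, Continuous (S j)
  diff1 : ∀ j i : ℤ, ∀ x : ℤ → ℝ, DifferentiableAt ℝ (fun t => S j (Function.update x i t)) (x i)
  diff2 : ∀ j i k : ℤ, ∀ x : ℤ → ℝ,
    DifferentiableAt ℝ (fun t => pd (S j) i (Function.update x k t)) (x k)
  cont1 : ∀ j i : ℤ, Continuous (pd (S j) i)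
  cont2 : ∀ j i k : ℤ, Continuous (pd (pd (S j) i) k)
  /- B: shift invariance -/
  shiftInv : ∀ j k l : ℤ, ∀ x : ℤ → ℝ, S j x = S (j + k) (tau k l x)
  /- C: coercivity -/
  coercive : ∀ j k : ℤ, |k - j| = 1 → ∀ M : ℝ, ∃ R : ℝ, ∀ x : ℤ → ℝ, R ≤ |x k - x j| → M ≤ S j x
  /- D: monotonicity -/
  mono : ∀ j i k : ℤ, i ≠ k → ∀ x : ℤ → ℝ, pd (pd (S j) i) k x ≤ 0
  monoStrict : ∀ j k : ℤ, |j - k| = 1 → ∀ x : ℤ → ℝ, pd (pd (S j) j) k x < 0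
  /- E: bounded derivatives -/
  bdd1 : ∀ j i : ℤ, ∀ x : ℤ → ℝ, |pd (S j) i x| ≤ C
  bdd2 : ∀ j i k : ℤ, ∀ x : ℤ → ℝ, |pd (pd (S j) i) k x| ≤ C

/-- The periodic action `W_p(x) = ∑_{j=1}^p S_j(x)`. -/
noncomputable def Wper (S : ℤ → (ℤ → ℝ) → ℝ) (p : ℕ) (x : ℤ → ℝ) : ℝ :=
  ∑ j ∈ Finset.Icc (1 : ℤ) (p : ℤ), S j x

/-- A `(p,q)`-periodic minimizer: `τ_{p,q} x = x` and `x` minimizes `W_p` over `X_{p,q}`. -/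
def PerMin (S : ℤ → (ℤ → ℝ) → ℝ) (p : ℕ) (q : ℤ) (x : ℤ → ℝ) : Prop :=
  tau (p : ℤ) q x = x ∧ ∀ y : ℤ → ℝ, tau (p : ℤ) q y = y → Wper S p x ≤ Wper S p y

/-- The (formally convergent, by finite range) energy difference `W(x+y) - W(x)`. -/
noncomputable def Wdiff (S : ℤ → (ℤ → ℝ) → ℝ) (x y : ℤ → ℝ) : ℝ :=
  ∑' j : ℤ, (S j (fun i => x i + y i) - S j x)

/-- `x` is a global minimizer: every finite-support variation does not decrease the energy. -/
def GlobalMin (S : ℤ → (ℤ → ℝ) → ℝ) (x : ℤ → ℝ) : Prop :=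
  ∀ y : ℤ → ℝ, (Function.support y).Finite → 0 ≤ Wdiff S x y

/-- The extended orbit `Σ_y = { y k + l : k, l ∈ ℤ }`. -/
def extOrbit (y : ℤ → ℝ) : Set ℝ := {ξ : ℝ | ∃ k l : ℤ, ξ = y k + (l : ℝ)}

/-!
For `x ∈ X_{p,q}` the sum `∑_{i=1}^p (τ_{k,l}x - x)_i` equals `pl - qk` exactly: increasing `k`
by one changes it by a telescoping sum, which periodicity evaluates to `-q`. The triangle
inequality then gives the bound, and for a Birkhoff sequence all terms of the sum have the same
sign. Hence a fixed point of `τ_{k,l}` in `X_{p,q}` forces `pl = qk`, while the linear sequence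
`i ↦ qi/p` is fixed by every such `τ_{k,l}`; so freeness says exactly that `pl = qk` implies
`(k,l) ∈ J_{p,q}`, which is coprimality of `p` and `q`.
-/

open Finset

theorem Finset.sum_abs_eq_abs_sum_of_nonneg_or_nonpos {ι G : Type*} [AddCommGroup G]
    [LinearOrder G] [IsOrderedAddMonoid G] {s : Finset ι} {f : ι → G}
    (hf : (∀ i ∈ s, 0 ≤ f i) ∨ ∀ i ∈ s, f i ≤ 0) :
    ∑ i ∈ s, |f i| = |∑ i ∈ s, f i| := by
  rcases hf with hf | hf
  · rw [abs_sum_of_nonneg hf]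
    exact sum_congr rfl fun i hi => abs_of_nonneg (hf i hi)
  · rw [← abs_neg, ← sum_neg_distrib, abs_sum_of_nonneg fun i hi => neg_nonneg.2 (hf i hi)]
    exact sum_congr rfl fun i hi => abs_of_nonpos (hf i hi)

theorem Int.isCoprime_iff_forall_mul_eq_mul {p q : ℤ} (hp : p ≠ 0) :
    IsCoprime p q ↔ ∀ k l : ℤ, p * l = q * k → ∃ n : ℤ, k = n * p ∧ l = n * q := by
  constructor
  · intro hpq k l hkl
    obtain ⟨n, rfl⟩ : p ∣ k := hpq.dvd_of_dvd_mul_left ⟨l, hkl.symm⟩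
    refine ⟨n, mul_comm p n, mul_left_cancel₀ hp ?_⟩
    rw [hkl]
    ring
  · intro h
    obtain ⟨p', q', -, hpp', hqq'⟩ := Int.exists_gcd_one (Int.gcd_pos_of_ne_zero_left q hp)
    obtain ⟨n, hn, -⟩ := h p' q' (by linear_combination q' * hpp' - p' * hqq')
    have hp' : p' ≠ 0 := by
      rintro rfl
      exact hp (by simpa using hpp')
    have hng : n * (p.gcd q : ℤ) = 1 :=
      mul_left_cancel₀ hp' (by linear_combination -hn - n * hpp')
    have hg : (p.gcd q : ℤ) = 1 :=
      Int.eq_one_of_mul_eq_one_left (Int.natCast_nonneg _) hng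
    rw [Int.isCoprime_iff_gcd_eq_one]
    exact_mod_cast hg

theorem tau_zero_zero (x : ℤ → ℝ) : tau 0 0 x = x := by
  funext i
  simp [tau]

theorem Birkhoff.tau_le_or_le {x : ℤ → ℝ} (hx : Birkhoff x) (k l : ℤ) :
    tau k l x ≤ x ∨ x ≤ tau k l x := by
  simpa only [tau_zero_zero] using hx k l 0 0

theorem tau_div_mul_eq_self {p q k l : ℤ} (hp : p ≠ 0) (hkl : p * l = q * k) :
    tau k l (fun i : ℤ => (q / p : ℝ) * i) = fun i : ℤ => (q / p : ℝ) * i := by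
  have hkl' : (p : ℝ) * l = q * k := by exact_mod_cast hkl
  funext i
  simp only [tau]
  field_simp
  push_cast
  linear_combination hkl'

theorem sum_Icc_sub_pred {M : Type*} [AddCommGroup M] (f : ℤ → M) (p : ℕ) :
    ∑ i ∈ Icc (1 : ℤ) p, (f i - f (i - 1)) = f p - f 0 := by
  induction p with
  | zero => simp
  | succ p ih =>
    push_cast
    rw [← insert_Icc_right_eq_Icc_add_one (by omega), sum_insert (by simp), ih,
      add_sub_cancel_right]
    abel

section Periodic

variable {p : ℕ} {q : ℤ} {x : ℤ → ℝ}

theorem sum_sub_shift_succ (hx : tau p q x = x) (k : ℤ) :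
    ∑ i ∈ Icc (1 : ℤ) p, (x (i - (k + 1)) - x i) =
      ∑ i ∈ Icc (1 : ℤ) p, (x (i - k) - x i) - q := by
  have hper : x (p - k - p) + q = x (p - k) := congrFun hx (p - k)
  have htele := sum_Icc_sub_pred (fun i => x (i - k)) p
  simp only [sub_sub_cancel_left, zero_sub] at hper htele
  calc ∑ i ∈ Icc (1 : ℤ) p, (x (i - (k + 1)) - x i)
      = ∑ i ∈ Icc (1 : ℤ) p, (x (i - k) - x i) -
          ∑ i ∈ Icc (1 : ℤ) p, (x (i - k) - x (i - 1 - k)) := by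
        rw [← sum_sub_distrib]
        exact sum_congr rfl fun i _ => by ring_nf
    _ = ∑ i ∈ Icc (1 : ℤ) p, (x (i - k) - x i) - q := by
        rw [htele, ← hper]
        ring

theorem sum_sub_shift (hx : tau p q x = x) (k : ℤ) :
    ∑ i ∈ Icc (1 : ℤ) p, (x (i - k) - x i) = -(q * k) := by
  induction k using Int.induction_on with
  | zero => simp
  | succ k ih =>
    rw [sum_sub_shift_succ hx, ih]
    push_cast
    ring
  | pred k ih =>
    have h := sum_sub_shift_succ hx (-k - 1)
    rw [sub_add_cancel, ih] at h
    push_cast at h ⊢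
    linarith

theorem sum_tau_sub_self (hx : tau p q x = x) (k l : ℤ) :
    ∑ i ∈ Icc (1 : ℤ) p, (tau k l x i - x i) = p * l - q * k := by
  have hcard : #(Icc (1 : ℤ) p) = p := by simp
  simp only [tau, add_sub_right_comm _ (l : ℝ), sum_add_distrib, sum_sub_shift hx, sum_const,
    hcard, nsmul_eq_mul]
  ring

theorem abs_le_sum_abs_tau_sub_self (hx : tau p q x = x) (k l : ℤ) :
    |(p : ℝ) * l - q * k| ≤ ∑ i ∈ Icc (1 : ℤ) p, |tau k l x i - x i| :=
  sum_tau_sub_self hx k l ▸ abs_sum_le_sum_abs _ _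

theorem sum_abs_tau_sub_self_of_birkhoff (hx : tau p q x = x) (hB : Birkhoff x) (k l : ℤ) :
    ∑ i ∈ Icc (1 : ℤ) p, |tau k l x i - x i| = |(p : ℝ) * l - q * k| := by
  rw [sum_abs_eq_abs_sum_of_nonneg_or_nonpos, sum_tau_sub_self hx]
  rcases hB.tau_le_or_le k l with h | h
  · exact Or.inr fun i _ => sub_nonpos.2 (h i)
  · exact Or.inl fun i _ => sub_nonneg.2 (h i)

theorem mul_eq_mul_of_tau_eq_self (hx : tau p q x = x) {k l : ℤ} (hkl : tau k l x = x) :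
    (p : ℤ) * l = q * k := by
  have h := sum_tau_sub_self hx k l
  simp only [hkl, sub_self, sum_const_zero] at h
  exact_mod_cast sub_eq_zero.1 h.symm

end Periodic

/-- For `x ∈ X_{p,q}`, `∑_{i=1}^p |(τ_{k,l}x - x)_i| ≥ |pl - qk|`, with
equality for Birkhoff `x`; consequently the induced action of `(ℤ×ℤ)/J_{p,q}` on `X_{p,q}`
is free iff `p` and `q` are relatively prime. -/
theorem shift_action_l1_bound_and_freeness (p : ℕ) (hp : 1 ≤ p) (q : ℤ) :
    (∀ k l : ℤ, ∀ x : ℤ → ℝ, tau (p : ℤ) q x = x →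
      |(p : ℝ) * (l : ℝ) - (q : ℝ) * (k : ℝ)| ≤
        ∑ i ∈ Finset.Icc (1 : ℤ) (p : ℤ), |tau k l x i - x i|) ∧
    (∀ k l : ℤ, ∀ x : ℤ → ℝ, tau (p : ℤ) q x = x → Birkhoff x →
      ∑ i ∈ Finset.Icc (1 : ℤ) (p : ℤ), |tau k l x i - x i| =
        |(p : ℝ) * (l : ℝ) - (q : ℝ) * (k : ℝ)|) ∧
    ((∀ k l : ℤ, ∀ x : ℤ → ℝ, tau (p : ℤ) q x = x → tau k l x = x →
        ∃ n : ℤ, k = n * (p : ℤ) ∧ l = n * q) ↔ IsCoprime (p : ℤ) q) := by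
  have hp0 : (p : ℤ) ≠ 0 := by omega
  refine ⟨fun k l x hx => abs_le_sum_abs_tau_sub_self hx k l,
    fun k l x hx hB => sum_abs_tau_sub_self_of_birkhoff hx hB k l, ?_⟩
  rw [Int.isCoprime_iff_forall_mul_eq_mul hp0]
  constructor
  · intro hfree k l hkl
    exact hfree k l (fun i : ℤ => (q / p : ℝ) * i) (tau_div_mul_eq_self hp0 (mul_comm _ _))
      (tau_div_mul_eq_self hp0 hkl)
  · intro h k l x hx hkl
    exact h k l (mul_eq_mul_of_tau_eq_self hx hkl)
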